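/- Fix a positive integer k. Let p be a prime, H a positive integer, N₀ ∈ [0,p], and suppose the numbers T(A) (for nonempty A ⊆ {1, …, H}) satisfy T(A) = p (N₀/p)^{|A|} + O(D^{2|A|} √p (log p)^{|A|}) for a parameter D ≥ 2. Define S_r and M_k as in the moment computation: S_0 = p, S_r = Σ_{t=1}^r S(r,t) t! Σ_{|A|=t} T(A), M_k = Σ_{r=0}^k C(k,r)(-HN₀/p)^{k-r} S_r. Then M_k = p μ_k(H, N₀/p) + O_k(D^{2k} H^k √p (log p)^k). -/

import Mathlib

/-!
Expanding `h ^ r = ∑ₜ S(r,t) t! (h choose t)` and using the factorial moments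
`E[(X choose t)] = (H choose t) P ^ t` of `X ~ Binomial(H, P)` shows that the sum `M_k` is exactly
`p μ_k(H, P)` when every `T(A)` is replaced by its main term `p P ^ |A|`. The sum is linear in `T`,
so the error is the same sum taken over the differences `T(A) - p P ^ |A|`. Its `r`-th term is
bounded using `t! (H choose t) ≤ H ^ t`, `|H P| ≤ H` and, since `log p ≥ log 2`,
`(log p) ^ t ≤ (log p / log 2) ^ k`.
-/

open Finset

def stirling2 : ℕ → ℕ → ℕ
  | 0, 0 => 1
  | 0, _ + 1 => 0
  | _ + 1, 0 => 0
  | n + 1, k + 1 => (k + 1) * stirling2 n (k + 1) + stirling2 n k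

theorem stirling2_eq_stirlingSecond : stirling2 = Nat.stirlingSecond := by
  funext n k
  induction n generalizing k with
  | zero => cases k <;> rfl
  | succ n ih => cases k <;> simp [stirling2, Nat.stirlingSecond_succ_succ, ih]

theorem Nat.mul_descFactorial_eq_add (n t : ℕ) :
    n * n.descFactorial t = n.descFactorial (t + 1) + t * n.descFactorial t := by
  rcases le_or_gt t n with h | h
  · rw [Nat.descFactorial_succ, ← add_mul, Nat.sub_add_cancel h]
  · simp [Nat.descFactorial_eq_zero_iff_lt.2 h]

theorem Nat.pow_eq_sum_stirlingSecond_mul_descFactorial (n r : ℕ) :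
    n ^ r = ∑ t ∈ range (r + 1), stirlingSecond r t * n.descFactorial t := by
  induction r with
  | zero => simp
  | succ r ih =>
    have hshift : ∑ t ∈ range (r + 1), stirlingSecond r t * (t * n.descFactorial t)
        = ∑ t ∈ range (r + 1), (t + 1) * stirlingSecond r (t + 1) * n.descFactorial (t + 1) := by
      rw [sum_range_succ', sum_range_succ, stirlingSecond_eq_zero_of_lt r.lt_succ_self]
      simp only [Nat.zero_mul, Nat.mul_zero, add_zero]
      exact sum_congr rfl fun t _ => by ring
    calc n ^ (r + 1)
        = ∑ t ∈ range (r + 1), stirlingSecond r t * (n * n.descFactorial t) := by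
          rw [pow_succ, ih, sum_mul]
          exact sum_congr rfl fun t _ => by ring
      _ = ∑ t ∈ range (r + 1), stirlingSecond (r + 1) (t + 1) * n.descFactorial (t + 1) := by
          simp only [mul_descFactorial_eq_add, mul_add, sum_add_distrib, hshift,
            stirlingSecond_succ_succ, add_mul]
          ring
      _ = _ := by rw [sum_range_succ' _ (r + 1), stirlingSecond_succ_zero, zero_mul, add_zero]

theorem sum_choose_mul_pow_mul_pow_mul_choose {R : Type*} [CommSemiring R] (x y : R) (H t : ℕ) :
    ∑ h ∈ range (H + 1), (H.choose h : R) * x ^ h * y ^ (H - h) * (h.choose t : R)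
      = H.choose t * x ^ t * (x + y) ^ (H - t) := by
  rcases lt_or_ge H t with hHt | htH
  · rw [Nat.choose_eq_zero_of_lt hHt, Nat.cast_zero, zero_mul, zero_mul]
    refine sum_eq_zero fun h hh => ?_
    rw [Nat.choose_eq_zero_of_lt (n := h) (by grind), Nat.cast_zero, mul_zero]
  obtain ⟨m, rfl⟩ := Nat.exists_eq_add_of_le htH
  have hlow : ∑ h ∈ range t, ((t + m).choose h : R) * x ^ h * y ^ (t + m - h) * (h.choose t : R)
      = 0 := sum_eq_zero fun h hh => by
    rw [Nat.choose_eq_zero_of_lt (n := h) (mem_range.1 hh), Nat.cast_zero, mul_zero]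
  rw [add_assoc, sum_range_add, hlow, zero_add, Nat.add_sub_cancel_left, add_pow, mul_sum]
  refine sum_congr rfl fun j _ => ?_
  have hchoose :
      ((t + m).choose (t + j) : R) * (t + j).choose t = (t + m).choose t * m.choose j := by
    have := Nat.choose_mul (n := t + m) (k := t + j) (s := t) le_self_add
    rw [Nat.add_sub_cancel_left, Nat.add_sub_cancel_left] at this
    rw [← Nat.cast_mul, ← Nat.cast_mul, this]
  calc _ = ((t + m).choose (t + j) : R) * (t + j).choose t * (x ^ t * x ^ j * y ^ (m - j)) := by
        rw [Nat.add_sub_add_left, pow_add]; ring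
    _ = _ := by rw [hchoose]; ring

theorem Nat.cast_pow_eq_sum_stirlingSecond {R : Type*} [CommSemiring R] (n r : ℕ) :
    (n : R) ^ r = ∑ t ∈ range (r + 1), (stirlingSecond r t * t.factorial * n.choose t : R) := by
  rw [← Nat.cast_pow, pow_eq_sum_stirlingSecond_mul_descFactorial]
  push_cast [descFactorial_eq_factorial_mul_choose]
  simp only [mul_assoc]

theorem sum_choose_mul_pow_mul_pow_mul_pow {R : Type*} [CommSemiring R] (x y : R) (H r : ℕ) :
    ∑ h ∈ range (H + 1), (H.choose h : R) * x ^ h * y ^ (H - h) * (h : R) ^ r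
      = ∑ t ∈ range (r + 1),
          (Nat.stirlingSecond r t * t.factorial * H.choose t : R) * x ^ t * (x + y) ^ (H - t) := by
  simp only [Nat.cast_pow_eq_sum_stirlingSecond, mul_sum]
  rw [sum_comm]
  refine sum_congr rfl fun t _ => ?_
  rw [mul_assoc _ (H.choose t : R), mul_assoc, ← sum_choose_mul_pow_mul_pow_mul_choose, mul_sum]
  exact sum_congr rfl fun h _ => by ring

theorem sum_mul_sub_pow {R ι : Type*} [CommRing R] (s : Finset ι) (w a : ι → R) (c : R) (k : ℕ) :
    ∑ i ∈ s, w i * (a i - c) ^ k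
      = ∑ r ∈ range (k + 1), (k.choose r : R) * (-c) ^ (k - r) * ∑ i ∈ s, w i * a i ^ r := by
  simp only [sub_eq_add_neg, add_pow, mul_sum]
  rw [sum_comm]
  exact sum_congr rfl fun i _ => sum_congr rfl fun r _ => by ring

def stirlingSum (H r : ℕ) (T : Finset ℕ → ℝ) : ℝ :=
  ∑ t ∈ range (r + 1), (Nat.stirlingSecond r t : ℝ) * t.factorial *
    ∑ A ∈ (Icc 1 H).powersetCard t, T A

-- `M_k` of the paper is `centralStirlingSum H k (H * N₀ / p)`.
def centralStirlingSum (H k : ℕ) (c : ℝ) (T : Finset ℕ → ℝ) : ℝ :=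
  ∑ r ∈ range (k + 1), (k.choose r : ℝ) * (-c) ^ (k - r) * stirlingSum H r T

theorem stirlingSum_update_empty (H r : ℕ) (T : Finset ℕ → ℝ) (a : ℝ) :
    stirlingSum H r (Function.update T ∅ a) =
      if r = 0 then a
      else ∑ t ∈ Icc 1 r, (Nat.stirlingSecond r t : ℝ) * t.factorial *
        ∑ A ∈ (Icc 1 H).powersetCard t, T A := by
  rcases r with _ | r
  · simp [stirlingSum]
  rw [if_neg r.succ_ne_zero, stirlingSum, range_eq_Ico,
    sum_eq_sum_Ico_succ_bot (Nat.succ_pos (r + 1)), Nat.stirlingSecond_succ_zero, Nat.cast_zero,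
    zero_mul, zero_mul, zero_add, zero_add, Nat.succ_eq_add_one, Ico_add_one_right_eq_Icc]
  refine sum_congr rfl fun t ht => congrArg _ (sum_congr rfl fun A hA => ?_)
  refine Function.update_of_ne (fun hA0 => ?_) _ _
  rw [mem_powersetCard, hA0, card_empty] at hA
  exact absurd hA.2 (by grind)

theorem stirlingSum_sub (H r : ℕ) (T T' : Finset ℕ → ℝ) :
    stirlingSum H r (T - T') = stirlingSum H r T - stirlingSum H r T' := by
  simp only [stirlingSum, Pi.sub_apply, sum_sub_distrib, mul_sub]

theorem centralStirlingSum_sub (H k : ℕ) (c : ℝ) (T T' : Finset ℕ → ℝ) :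
    centralStirlingSum H k c (T - T') =
      centralStirlingSum H k c T - centralStirlingSum H k c T' := by
  simp only [centralStirlingSum, stirlingSum_sub, sum_sub_distrib, mul_sub]

theorem stirlingSum_const_mul_pow_card (H r : ℕ) (a x : ℝ) :
    stirlingSum H r (fun A => a * x ^ A.card) =
      a * ∑ h ∈ range (H + 1), (H.choose h : ℝ) * x ^ h * (1 - x) ^ (H - h) * (h : ℝ) ^ r := by
  rw [sum_choose_mul_pow_mul_pow_mul_pow, add_sub_cancel, stirlingSum, mul_sum]
  refine sum_congr rfl fun t _ => ?_
  rw [sum_congr rfl fun A hA => by rw [(mem_powersetCard.1 hA).2], sum_const, card_powersetCard,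
    Nat.card_Icc, Nat.add_sub_cancel, nsmul_eq_mul, one_pow, mul_one]
  ring

theorem centralStirlingSum_const_mul_pow_card (H k : ℕ) (a x : ℝ) :
    centralStirlingSum H k (H * x) (fun A => a * x ^ A.card) =
      a * ∑ h ∈ range (H + 1),
        (H.choose h : ℝ) * x ^ h * (1 - x) ^ (H - h) * ((h : ℝ) - H * x) ^ k := by
  simp only [centralStirlingSum, stirlingSum_const_mul_pow_card, sum_mul_sub_pow, mul_sum]
  exact sum_congr rfl fun r _ => sum_congr rfl fun h _ => by ring

theorem Nat.factorial_mul_choose_le_pow {H t r : ℕ} (hH : 0 < H) (htr : t ≤ r) :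
    t.factorial * H.choose t ≤ H ^ r := by
  rw [← Nat.descFactorial_eq_factorial_mul_choose]
  exact (Nat.descFactorial_le_pow H t).trans (Nat.pow_le_pow_right hH htr)

theorem abs_stirlingSum_le {H r : ℕ} (hH : 0 < H) {E : Finset ℕ → ℝ} {ε : ℝ}
    (hE : ∀ A ⊆ Icc 1 H, A.card ≤ r → |E A| ≤ ε) :
    |stirlingSum H r E| ≤ (∑ t ∈ range (r + 1), Nat.stirlingSecond r t : ℕ) * (H : ℝ) ^ r * ε := by
  have hε : 0 ≤ ε := (abs_nonneg _).trans (hE ∅ (empty_subset _) (Nat.zero_le _))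
  rw [Nat.cast_sum, sum_mul, sum_mul]
  refine (abs_sum_le_sum_abs _ _).trans (sum_le_sum fun t ht => ?_)
  have htr := mem_range_succ_iff.1 ht
  have hinner : |∑ A ∈ (Icc 1 H).powersetCard t, E A| ≤ H.choose t * ε := by
    refine (abs_sum_le_sum_abs _ _).trans ((sum_le_card_nsmul _ _ ε fun A hA => ?_).trans_eq ?_)
    · rw [mem_powersetCard] at hA
      exact hE A hA.1 (hA.2.trans_le htr)
    · rw [card_powersetCard, Nat.card_Icc, Nat.add_sub_cancel, nsmul_eq_mul]
  have hfac : (t.factorial * H.choose t : ℝ) ≤ (H : ℝ) ^ r := by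
    exact_mod_cast Nat.factorial_mul_choose_le_pow hH htr
  rw [abs_mul, abs_mul, Nat.abs_cast, Nat.abs_cast]
  calc (Nat.stirlingSecond r t : ℝ) * t.factorial * |∑ A ∈ (Icc 1 H).powersetCard t, E A|
      ≤ Nat.stirlingSecond r t * t.factorial * (H.choose t * ε) := by gcongr
    _ = Nat.stirlingSecond r t * (t.factorial * H.choose t) * ε := by ring
    _ ≤ Nat.stirlingSecond r t * (H : ℝ) ^ r * ε := by gcongr

def centralStirlingConstant (k : ℕ) : ℕ :=
  ∑ r ∈ range (k + 1), k.choose r * ∑ t ∈ range (r + 1), Nat.stirlingSecond r t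

theorem centralStirlingConstant_pos (k : ℕ) : 0 < centralStirlingConstant k :=
  sum_pos' (fun _ _ => Nat.zero_le _) ⟨0, by simp, by simp⟩

theorem abs_centralStirlingSum_le {H k : ℕ} (hH : 0 < H) {c ε : ℝ} (hc : |c| ≤ H)
    {E : Finset ℕ → ℝ} (hE : ∀ A ⊆ Icc 1 H, A.card ≤ k → |E A| ≤ ε) :
    |centralStirlingSum H k c E| ≤ centralStirlingConstant k * (H : ℝ) ^ k * ε := by
  have hε : 0 ≤ ε := (abs_nonneg _).trans (hE ∅ (empty_subset _) (Nat.zero_le _))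
  rw [centralStirlingConstant, Nat.cast_sum, sum_mul, sum_mul]
  refine (abs_sum_le_sum_abs _ _).trans (sum_le_sum fun r hr => ?_)
  have hrk := mem_range_succ_iff.1 hr
  have hS := abs_stirlingSum_le hH fun A hA hAr => hE A hA (hAr.trans hrk)
  rw [abs_mul, abs_mul, abs_pow, abs_neg, Nat.abs_cast]
  calc (k.choose r : ℝ) * |c| ^ (k - r) * |stirlingSum H r E|
      ≤ k.choose r * (H : ℝ) ^ (k - r) *
          ((∑ t ∈ range (r + 1), Nat.stirlingSecond r t : ℕ) * (H : ℝ) ^ r * ε) := by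
        gcongr
    _ = (k.choose r * ∑ t ∈ range (r + 1), Nat.stirlingSecond r t : ℕ) *
          ((H : ℝ) ^ (k - r) * (H : ℝ) ^ r) * ε := by
        push_cast; ring
    _ = _ := by rw [pow_sub_mul_pow _ hrk]

theorem pow_le_div_pow {a x : ℝ} {t k : ℕ} (ha₀ : 0 < a) (ha₁ : a ≤ 1) (hax : a ≤ x)
    (htk : t ≤ k) : x ^ t ≤ (x / a) ^ k :=
  calc x ^ t = a ^ t * (x / a) ^ t := by rw [← mul_pow, mul_div_cancel₀ _ ha₀.ne']
    _ ≤ 1 * (x / a) ^ k :=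
      mul_le_mul (pow_le_one₀ ha₀.le ha₁) (pow_le_pow_right₀ ((one_le_div ha₀).2 hax) htk)
        (pow_nonneg (div_nonneg (ha₀.le.trans hax) ha₀.le) t) zero_le_one
    _ = (x / a) ^ k := one_mul _

theorem moments_weil_general (k : ℕ) :
    ∃ C : ℝ, 0 < C ∧
      ∀ (p H : ℕ) (N₀ D c₀ : ℝ) (T : Finset ℕ → ℝ),
        p.Prime → 0 < H → 0 ≤ N₀ → N₀ ≤ p → 2 ≤ D → 0 ≤ c₀ →
        (∀ A ⊆ Finset.Icc 1 H, A.Nonempty →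
          |T A - p * (N₀ / p) ^ A.card|
            ≤ c₀ * D ^ (2 * A.card) * Real.sqrt p * Real.log p ^ A.card) →
        |(∑ r ∈ Finset.range (k + 1), (k.choose r : ℝ) * (-(H * N₀ / p)) ^ (k - r) *
            (if r = 0 then (p : ℝ)
              else ∑ t ∈ Finset.Icc 1 r, (stirling2 r t : ℝ) * (t.factorial : ℝ) *
                ∑ A ∈ (Finset.Icc 1 H).powersetCard t, T A))
          - p * (∑ h ∈ Finset.range (H + 1),
              (H.choose h : ℝ) * (N₀ / p) ^ h * (1 - N₀ / p) ^ (H - h)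
                * ((h : ℝ) - H * (N₀ / p)) ^ k)|
          ≤ C * c₀ * D ^ (2 * k) * (H : ℝ) ^ k * Real.sqrt p * Real.log p ^ k := by
  have hlog2 : 0 < Real.log 2 := Real.log_pos one_lt_two
  refine ⟨centralStirlingConstant k / Real.log 2 ^ k,
    div_pos (Nat.cast_pos.2 (centralStirlingConstant_pos k)) (pow_pos hlog2 k), ?_⟩
  intro p H N₀ D c₀ T hp hH hN₀ hN₀p hD hc₀ hT
  set P := N₀ / p
  have hp₀ : (0 : ℝ) < p := by exact_mod_cast hp.pos
  have hlog : Real.log 2 ≤ Real.log p := Real.log_le_log two_pos (by exact_mod_cast hp.two_le)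
  have hHP : |(H : ℝ) * P| ≤ H := by
    rw [abs_of_nonneg (by positivity)]
    exact mul_le_of_le_one_right (by positivity) ((div_le_one hp₀).2 hN₀p)
  -- `S_0 = p` is the `t = 0` term of `stirlingSum` once `T ∅` is set to `p = p P ^ 0`.
  have hE : ∀ A ⊆ Icc 1 H, A.card ≤ k →
      |(Function.update T ∅ (p : ℝ) - fun B : Finset ℕ => p * P ^ B.card) A|
        ≤ c₀ * D ^ (2 * k) * √p * (Real.log p / Real.log 2) ^ k := by
    intro A hA hAk
    rcases A.eq_empty_or_nonempty with rfl | hne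
    · simp only [Pi.sub_apply, Function.update_self, card_empty, pow_zero, mul_one, sub_self,
        abs_zero]
      positivity
    rw [Pi.sub_apply, Function.update_of_ne hne.ne_empty]
    refine (hT A hA hne).trans ?_
    gcongr
    · exact one_le_two.trans hD
    · exact pow_le_div_pow hlog2 (Real.log_two_lt_d9.le.trans (by norm_num)) hlog hAk
  have key := abs_centralStirlingSum_le hH hHP hE
  rw [centralStirlingSum_sub, centralStirlingSum_const_mul_pow_card] at key
  rw [stirling2_eq_stirlingSecond]
  simp only [← stirlingSum_update_empty, mul_div_assoc]
  refine key.trans_eq ?_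
  rw [div_pow]
  field_simp

/-- Quantitative form of Theorem 1.2: if the pattern counts obey a Weil-type
estimate `T(A) = p(N₀/p)^{|A|} + O(D^{2|A|}√p (log p)^{|A|})`, then
`M_k = p μ_k(H, N₀/p) + O_k(D^{2k} H^k √p (log p)^k)`. -/
theorem moments_weil (k : ℕ) (hk : 0 < k) :
    ∃ C : ℝ, 0 < C ∧
      ∀ (p H : ℕ) (N₀ D c₀ : ℝ) (T : Finset ℕ → ℝ),
        p.Prime → 0 < H → 0 ≤ N₀ → N₀ ≤ p → 2 ≤ D → 0 ≤ c₀ →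
        (∀ A ⊆ Finset.Icc 1 H, A.Nonempty →
          |T A - p * (N₀ / p) ^ A.card|
            ≤ c₀ * D ^ (2 * A.card) * Real.sqrt p * Real.log p ^ A.card) →
        |(∑ r ∈ Finset.range (k + 1), (k.choose r : ℝ) * (-(H * N₀ / p)) ^ (k - r) *
            (if r = 0 then (p : ℝ)
              else ∑ t ∈ Finset.Icc 1 r, (stirling2 r t : ℝ) * (t.factorial : ℝ) *
                ∑ A ∈ (Finset.Icc 1 H).powersetCard t, T A))
          - p * (∑ h ∈ Finset.range (H + 1),
              (H.choose h : ℝ) * (N₀ / p) ^ h * (1 - N₀ / p) ^ (H - h)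
                * ((h : ℝ) - H * (N₀ / p)) ^ k)|
          ≤ C * c₀ * D ^ (2 * k) * (H : ℝ) ^ k * Real.sqrt p * Real.log p ^ k :=
  moments_weil_general k
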